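/- Let T be an infinite tree. Then the following conditions are equivalent: (i) T is almost a ray; (ii) for every non-degenerate labeling l : V(T) → [0,∞), the ultrametric space (V(T), d_l) is totally bounded if and only if there is an infinite totally bounded subset A ⊆ V(T) of (V(T), d_l). -/

import Mathlib

open SimpleGraph

/-- `d` is an ultrametric on `V`: a metric satisfying the strong triangle inequality. -/
def IsUltrametricOn {V : Type*} (d : V → V → ℝ) : Prop :=
  (∀ x y, 0 ≤ d x y) ∧ (∀ x y, d x y = d y x) ∧
    (∀ x y, d x y = 0 ↔ x = y) ∧
    ∀ x y z, d x y ≤ max (d x z) (d z y)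

/-- The vertex labeling `l` of the graph `G` is non-degenerate:
`max {l u, l v} > 0` for every edge `{u, v}`. -/
def NondegenerateLabeling {V : Type*} (G : SimpleGraph V) (l : V → ℝ) : Prop :=
  ∀ u v, G.Adj u v → 0 < max (l u) (l v)

/-- `d` is the function `d_l` generated by the vertex labeling `l` on the tree `G`:
`d u u = 0`, and for `u ≠ v`, `d u v` is the maximum of the labels of the vertices of
the (unique) path joining `u` and `v`. -/
def IsLabelDist {V : Type*} (G : SimpleGraph V) (l : V → ℝ) (d : V → V → ℝ) : Prop :=
  (∀ u, d u u = 0) ∧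
    ∀ u v : V, u ≠ v → ∀ p : G.Walk u v, p.IsPath →
      IsGreatest (l '' {w | w ∈ p.support}) (d u v)

/-- `x` is a Cauchy sequence with respect to the distance function `d`. -/
def CauchyWith {V : Type*} (d : V → V → ℝ) (x : ℕ → V) : Prop :=
  ∀ ε : ℝ, 0 < ε → ∃ N : ℕ, ∀ m ≥ N, ∀ n ≥ N, d (x m) (x n) < ε

/-- The set `A` is totally bounded with respect to the distance function `d`:
for every `r > 0` it is covered by finitely many open balls of radius `r` centered in `A`. -/
def TotallyBoundedWith {V : Type*} (d : V → V → ℝ) (A : Set V) : Prop :=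
  ∀ r : ℝ, 0 < r → ∃ s : Finset V, ↑s ⊆ A ∧ ∀ x ∈ A, ∃ c ∈ s, d c x < r

/-- The space `V` with distance `d` is compact: every cover of `V` by open balls
(given by center–radius pairs) contains a finite subcover. -/
def CompactWith {V : Type*} (d : V → V → ℝ) : Prop :=
  ∀ F : Set (V × ℝ), (∀ x : V, ∃ p ∈ F, d p.1 x < p.2) →
    ∃ s : Finset (V × ℝ), ↑s ⊆ F ∧ ∀ x : V, ∃ p ∈ s, d p.1 x < p.2

/-- The subgraph `R` of `G` is a ray: its vertices can be enumerated as a sequence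
`f 0, f 1, …` of pairwise distinct vertices, with edges exactly `{f n, f (n+1)}`. -/
def IsRaySubgraph {V : Type*} {G : SimpleGraph V} (R : G.Subgraph) : Prop :=
  ∃ f : ℕ → V, Function.Injective f ∧ R.verts = Set.range f ∧
    ∀ x y, R.Adj x y ↔ ∃ n, (x = f n ∧ y = f (n + 1)) ∨ (x = f (n + 1) ∧ y = f n)

/-- The subgraph `T₀` of `G` is a finite subtree. -/
def IsFiniteSubtree {V : Type*} {G : SimpleGraph V} (T₀ : G.Subgraph) : Prop :=
  T₀.verts.Finite ∧ T₀.coe.IsTree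

/-- The subgraph `H` of `G` is almost a ray: `H` is the union of a ray and a finite subtree. -/
def IsAlmostRaySubgraph {V : Type*} {G : SimpleGraph V} (H : G.Subgraph) : Prop :=
  ∃ R T₀ : G.Subgraph, IsRaySubgraph R ∧ IsFiniteSubtree T₀ ∧ T₀ ⊔ R = H

/-- The graph `G` is almost a ray: `G` is the union of a ray and a finite subtree. -/
def IsAlmostRayGraph {V : Type*} (G : SimpleGraph V) : Prop :=
  ∃ R T₀ : G.Subgraph, IsRaySubgraph R ∧ IsFiniteSubtree T₀ ∧ T₀ ⊔ R = ⊤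

/-- `H` is the convex hull of the vertex set `A` in `G`: a subtree containing `A`
which is a subgraph of every subtree of `G` containing `A`. -/
def IsConvexHullSubtree {V : Type*} (G : SimpleGraph V) (A : Set V) (H : G.Subgraph) : Prop :=
  H.coe.IsTree ∧ A ⊆ H.verts ∧
    ∀ H' : G.Subgraph, H'.coe.IsTree → A ⊆ H'.verts → H ≤ H'

/-!
A tree is almost a ray iff it contains a ray `f` with only finitely many vertices off it: the finite
subtree is spanned by the paths from `f 0` to those vertices. Since `d_l` is an ultrametric and
`d_l (f m) (f n)` is the largest label between `f m` and `f n`, an infinite totally bounded set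
meets some small ball in infinitely many ray vertices, which forces all labels far out on the ray
to be small; hence the whole space is totally bounded.

Conversely, if `T` is not almost a ray, either a vertex `v` has infinitely many neighbours or, by
Kőnig's lemma, `T` contains a ray with infinitely many vertices off it. Labelling every other
neighbour of `v` by `1 / (n + 1)` and `v` by `0` (resp. the ray by `1 / (n + 1)`), and all other
vertices by `1`, makes those `1 / (n + 1)`-labelled vertices an infinite totally bounded set,
while the infinitely many vertices of label `1` are at distance at least `1` from everything else.
-/

section

variable {V : Type*} {G : SimpleGraph V} {l : V → ℝ} {d : V → V → ℝ}

namespace IsLabelDist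

lemma label_le (hd : IsLabelDist G l d) {u v w : V} (huv : u ≠ v) {p : G.Walk u v}
    (hp : p.IsPath) (hw : w ∈ p.support) : l w ≤ d u v :=
  (hd.2 u v huv p hp).2 ⟨w, hw, rfl⟩

lemma exists_mem_support_eq (hd : IsLabelDist G l d) {u v : V} (huv : u ≠ v)
    {p : G.Walk u v} (hp : p.IsPath) : ∃ w ∈ p.support, d u v = l w := by
  obtain ⟨w, hw, hlw⟩ := (hd.2 u v huv p hp).1
  exact ⟨w, hw, hlw.symm⟩

lemma label_le_left (hd : IsLabelDist G l d) (hG : G.Connected) {u v : V} (huv : u ≠ v) :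
    l u ≤ d u v := by
  obtain ⟨p, hp⟩ := (hG u v).exists_isPath
  exact hd.label_le huv hp p.start_mem_support

lemma symm (hd : IsLabelDist G l d) (hG : G.Connected) (u v : V) : d u v = d v u := by
  rcases eq_or_ne u v with rfl | huv
  · rfl
  obtain ⟨p, hp⟩ := (hG u v).exists_isPath
  refine (hd.2 u v huv p hp).unique ?_
  simpa using hd.2 v u huv.symm p.reverse hp.reverse

lemma eq_max_of_adj (hd : IsLabelDist G l d) {u v : V} (huv : G.Adj u v) :
    d u v = max (l u) (l v) := by
  have hp : (Walk.cons huv Walk.nil).IsPath := by simp [huv.ne]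
  obtain ⟨w, hw, hdw⟩ := hd.exists_mem_support_eq huv.ne hp
  refine le_antisymm ?_ (max_le (hd.label_le huv.ne hp (by simp))
    (hd.label_le huv.ne hp (by simp)))
  simp only [Walk.support_cons, Walk.support_nil, List.mem_cons,
    List.not_mem_nil, or_false] at hw
  rcases hw with rfl | rfl <;> simp [hdw]

/-- The strong triangle inequality: the path from `u` to `v` runs inside the union of the paths
from `u` to `w` and from `w` to `v`. -/
lemma le_max (hd : IsLabelDist G l d) (hG : G.Connected) {u v : V} (huv : u ≠ v) (w : V) :
    d u v ≤ max (d u w) (d w v) := by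
  classical
  rcases eq_or_ne u w with rfl | huw
  · exact le_max_right _ _
  rcases eq_or_ne w v with rfl | hwv
  · exact le_max_left _ _
  obtain ⟨p, hp⟩ := (hG u w).exists_isPath
  obtain ⟨q, hq⟩ := (hG w v).exists_isPath
  obtain ⟨x, hx, hdx⟩ := hd.exists_mem_support_eq huv (p.append q).bypass_isPath
  rw [hdx]
  have hx' := (p.append q).support_bypass_subset_support hx
  rcases (Walk.mem_support_append_iff _ _).1 hx' with hx | hx
  · exact (hd.label_le huw hp hx).trans (le_max_left _ _)
  · exact (hd.label_le hwv hq hx).trans (le_max_right _ _)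

lemma finite_setOf_le_label (hd : IsLabelDist G l d) (hG : G.Connected)
    (hTB : TotallyBoundedWith d Set.univ) {r : ℝ} (hr : 0 < r) : {x | r ≤ l x}.Finite := by
  obtain ⟨s, -, hs⟩ := hTB r hr
  refine s.finite_toSet.subset fun x hx => ?_
  obtain ⟨c, hc, hcx⟩ := hs x (Set.mem_univ x)
  rcases eq_or_ne c x with rfl | hne
  · exact hc
  · rw [hd.symm hG] at hcx
    exact absurd hcx (not_lt.2 (hx.trans (hd.label_le_left hG hne.symm)))

end IsLabelDist

lemma totallyBoundedWith_union_range {S : Set V} (hS : S.Finite) {a : ℕ → V}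
    (hd0 : ∀ u, d u u = 0) (htail : ∀ r > 0, ∃ K, ∀ k ≥ K, d (a K) (a k) < r) :
    TotallyBoundedWith d (S ∪ Set.range a) := by
  classical
  intro r hr
  obtain ⟨K, hK⟩ := htail r hr
  refine ⟨hS.toFinset ∪ (Finset.range (K + 1)).image a, ?_, ?_⟩
  · intro x hx
    simp only [Finset.coe_union, Finset.coe_image, Finset.coe_range, Set.Finite.coe_toFinset,
      Set.mem_union, Set.mem_image, Set.mem_Iio] at hx
    rcases hx with hx | ⟨k, -, rfl⟩
    · exact Or.inl hx
    · exact Or.inr ⟨k, rfl⟩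
  · have hself : ∀ x, d x x < r := fun x => (hd0 x).symm ▸ hr
    rintro x (hx | ⟨k, rfl⟩)
    · exact ⟨x, by simp [hx], hself x⟩
    rcases le_or_gt k K with hk | hk
    · exact ⟨a k, by simpa using Or.inr ⟨k, hk, rfl⟩, hself _⟩
    · exact ⟨a K, by simpa using Or.inr ⟨K, le_rfl, rfl⟩, hK k hk.le⟩

lemma exists_tail_lt_of_le_one_div (hd0 : ∀ u, d u u = 0) {a : ℕ → V}
    (ha : ∀ K k, K < k → d (a K) (a k) ≤ 1 / (K + 1)) :
    ∀ r > 0, ∃ K, ∀ k ≥ K, d (a K) (a k) < r := by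
  intro r hr
  obtain ⟨K, hK⟩ := exists_nat_one_div_lt hr
  refine ⟨K, fun k hk => ?_⟩
  rcases hk.eq_or_lt with rfl | hk
  · rwa [hd0]
  · exact (ha K k hk).trans_lt hK

section Ray

variable {f : ℕ → V}

def rayWalk (hadj : ∀ n, G.Adj (f n) (f (n + 1))) (n : ℕ) :
    (k : ℕ) → G.Walk (f n) (f (n + k))
  | 0 => Walk.nil
  | k + 1 => (rayWalk hadj n k).concat (hadj (n + k))

lemma length_rayWalk (hadj : ∀ n, G.Adj (f n) (f (n + 1))) (n k : ℕ) :
    (rayWalk hadj n k).length = k := by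
  induction k with
  | zero => rfl
  | succ k ih => rw [rayWalk, Walk.length_concat, ih]

lemma support_rayWalk (hadj : ∀ n, G.Adj (f n) (f (n + 1))) (n k : ℕ) :
    (rayWalk hadj n k).support = (List.range (k + 1)).map (fun i => f (n + i)) := by
  induction k with
  | zero => rfl
  | succ k ih => rw [rayWalk, Walk.support_concat, ih, List.range_succ (n := k + 1)]; simp

lemma mem_support_rayWalk (hadj : ∀ n, G.Adj (f n) (f (n + 1))) {n k : ℕ} {x : V} :
    x ∈ (rayWalk hadj n k).support ↔ ∃ i ≤ k, f (n + i) = x := by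
  simp [support_rayWalk]

lemma isPath_rayWalk (hadj : ∀ n, G.Adj (f n) (f (n + 1))) (hinj : Function.Injective f)
    (n k : ℕ) : (rayWalk hadj n k).IsPath := by
  rw [Walk.isPath_def, support_rayWalk]
  exact List.nodup_range.map fun i j hij => Nat.add_left_cancel (hinj hij)

lemma IsLabelDist.label_le_of_ray (hd : IsLabelDist G l d)
    (hadj : ∀ n, G.Adj (f n) (f (n + 1))) (hinj : Function.Injective f) {n i k : ℕ}
    (hk : k ≠ 0) (hik : i ≤ k) : l (f (n + i)) ≤ d (f n) (f (n + k)) :=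
  hd.label_le (fun h => hk (by simpa using hinj h)) (isPath_rayWalk hadj hinj n k)
    ((mem_support_rayWalk hadj).2 ⟨i, hik, rfl⟩)

lemma IsLabelDist.le_of_ray (hd : IsLabelDist G l d)
    (hadj : ∀ n, G.Adj (f n) (f (n + 1))) (hinj : Function.Injective f) {n i k : ℕ}
    (hi : i ≠ 0) (hik : i ≤ k) : d (f n) (f (n + i)) ≤ d (f n) (f (n + k)) := by
  obtain ⟨x, hx, hdx⟩ := hd.exists_mem_support_eq (fun h => hi (by simpa using hinj h))
    (isPath_rayWalk hadj hinj n i)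
  obtain ⟨j, hj, rfl⟩ := (mem_support_rayWalk hadj).1 hx
  exact hdx ▸ hd.label_le_of_ray hadj hinj (by omega) (hj.trans hik)

lemma SimpleGraph.IsAcyclic.eq_one_of_adj_ray (hG : G.IsAcyclic)
    (hadj : ∀ n, G.Adj (f n) (f (n + 1))) (hinj : Function.Injective f) {n k : ℕ}
    (h : G.Adj (f n) (f (n + k))) : k = 1 := by
  have hedge : (Walk.cons h Walk.nil).IsPath := by simp [h.ne]
  have := (hG.subsingleton_path _ _).elim ⟨_, isPath_rayWalk hadj hinj n k⟩ ⟨_, hedge⟩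
  simpa [length_rayWalk] using congrArg (fun p : G.Path _ _ => p.1.length) this

lemma SimpleGraph.IsAcyclic.adj_ray_iff (hG : G.IsAcyclic)
    (hadj : ∀ n, G.Adj (f n) (f (n + 1))) (hinj : Function.Injective f) {m n : ℕ} :
    G.Adj (f m) (f n) ↔ n = m + 1 ∨ m = n + 1 := by
  refine ⟨fun h => ?_, ?_⟩
  · rcases le_total m n with hmn | hnm
    · obtain ⟨k, rfl⟩ := Nat.exists_eq_add_of_le hmn
      exact Or.inl (by rw [hG.eq_one_of_adj_ray hadj hinj h])
    · obtain ⟨k, rfl⟩ := Nat.exists_eq_add_of_le hnm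
      exact Or.inr (by rw [hG.eq_one_of_adj_ray hadj hinj h.symm])
  · rintro (rfl | rfl)
    exacts [hadj m, (hadj n).symm]

end Ray

namespace SimpleGraph.IsTree

variable (hG : G.IsTree)

noncomputable def path (u v : V) : G.Walk u v :=
  (hG.existsUnique_path u v).exists.choose

lemma isPath_path (u v : V) : (hG.path u v).IsPath :=
  (hG.existsUnique_path u v).exists.choose_spec

variable {hG}

lemma eq_path {u v : V} {p : G.Walk u v} (hp : p.IsPath) : p = hG.path u v :=
  (hG.existsUnique_path u v).unique hp (hG.isPath_path u v)

variable (hG)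

def descendants (r x : V) : Set V := {y | x ∈ (hG.path r y).support}

lemma path_eq_concat_of_adj {r x c : V} (h : G.Adj x c) (hc : c ∉ (hG.path r x).support) :
    hG.path r c = (hG.path r x).concat h :=
  (eq_path ((hG.isPath_path r x).concat hc h)).symm

lemma exists_descendants_of_mem_descendants {r x y : V} (hy : y ∈ hG.descendants r x)
    (hxy : x ≠ y) :
    ∃ c, G.Adj x c ∧ c ∉ (hG.path r x).support ∧ y ∈ hG.descendants r c := by
  obtain ⟨p, q, hp, -, hpq⟩ := (hG.isPath_path r y).mem_support_iff_exists_append.1 hy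
  obtain ⟨c, h, q, rfl⟩ := Walk.exists_eq_cons_of_ne hxy q
  have hpath := hG.isPath_path r y
  rw [hpq] at hpath
  refine ⟨c, h, fun hc => ?_, ?_⟩
  · rw [← eq_path hp] at hc
    exact hpath.ne_of_mem_support_of_append h.ne' hc (by simp) rfl
  · show c ∈ (hG.path r y).support
    rw [hpq, Walk.mem_support_append_iff]
    simp

lemma exists_infinite_descendants_of_adj (hfin : ∀ v, (G.neighborSet v).Finite) {r x : V}
    (hx : (hG.descendants r x).Infinite) :
    ∃ c, G.Adj x c ∧ c ∉ (hG.path r x).support ∧ (hG.descendants r c).Infinite := by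
  by_contra! hcon
  have hchildren : {c | G.Adj x c ∧ c ∉ (hG.path r x).support}.Finite :=
    (hfin x).subset fun c hc => hc.1
  refine hx (((Set.finite_singleton x).union
    (hchildren.biUnion fun c hc => hcon c hc.1 hc.2)).subset fun y hy => ?_)
  rcases eq_or_ne x y with rfl | hxy
  · exact Or.inl rfl
  obtain ⟨c, hxc, hc, hyc⟩ := hG.exists_descendants_of_mem_descendants hy hxy
  exact Or.inr (Set.mem_biUnion ⟨hxc, hc⟩ hyc)

end SimpleGraph.IsTree

/-- Kőnig's lemma for trees: follow, from a root, children with infinitely many descendants. -/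
lemma SimpleGraph.IsTree.exists_ray (hG : G.IsTree) [Infinite V]
    (hfin : ∀ v, (G.neighborSet v).Finite) :
    ∃ f : ℕ → V, Function.Injective f ∧ ∀ n, G.Adj (f n) (f (n + 1)) := by
  obtain ⟨r⟩ := (inferInstance : Nonempty V)
  have hr : (hG.descendants r r).Infinite := by
    convert Set.infinite_univ (α := V)
    exact Set.eq_univ_of_forall fun y => Walk.start_mem_support _
  choose next hadj hnext hinf using
    fun x : {x // (hG.descendants r x).Infinite} => hG.exists_infinite_descendants_of_adj hfin x.2
  let g : ℕ → {x // (hG.descendants r x).Infinite} :=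
    fun n => Nat.rec ⟨r, hr⟩ (fun _ x => ⟨next x, hinf x⟩) n
  have hlength : ∀ n, (hG.path r (g n).1).length = n := by
    intro n
    induction n with
    | zero => exact congrArg Walk.length (hG.eq_path (Walk.IsPath.nil (u := r))).symm
    | succ n ih =>
      rw [show (g (n + 1)).1 = next (g n) from rfl, hG.path_eq_concat_of_adj (hadj _) (hnext _),
        Walk.length_concat, ih]
  refine ⟨fun n => (g n).1, fun a b hab => ?_, fun n => hadj (g n)⟩
  simpa [hlength] using congrArg (fun x => (hG.path r x).length) hab

lemma SimpleGraph.IsTree.exists_isLabelDist (hG : G.IsTree) (l : V → ℝ) :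
    ∃ d, IsLabelDist G l d := by
  classical
  refine ⟨fun u v => if u = v then 0 else sSup (l '' {w | w ∈ (hG.path u v).support}),
    fun u => if_pos rfl, fun u v huv p hp => ?_⟩
  simp only [if_neg huv, hG.eq_path hp]
  have hfin := ((hG.path u v).support.finite_toSet).image l
  exact ⟨(Set.Nonempty.image l ⟨u, Walk.start_mem_support _⟩).csSup_mem hfin,
    fun x hx => le_csSup hfin.bddAbove hx⟩

lemma SimpleGraph.connected_induce_iUnion_support {r : V} {B : Set V} (hB : B.Nonempty)
    (p : ∀ b, G.Walk r b) :
    ((⊤ : G.Subgraph).induce (⋃ b ∈ B, {x | x ∈ (p b).support})).Connected := by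
  classical
  rw [Subgraph.connected_iff_forall_exists_walk_subgraph]
  obtain ⟨b₀, hb₀⟩ := hB
  refine ⟨⟨r, Set.mem_biUnion hb₀ (p b₀).start_mem_support⟩, fun {u v} hu hv => ?_⟩
  simp only [Subgraph.induce_verts, Set.mem_iUnion₂, Set.mem_ofPred_eq] at hu hv
  obtain ⟨b, hb, hub⟩ := hu
  obtain ⟨b', hb', hvb'⟩ := hv
  refine ⟨((p b).takeUntil u hub).reverse.append ((p b').takeUntil v hvb'), ?_⟩
  refine (Walk.toSubgraph_le_induce_support _).trans (Subgraph.induce_mono_right fun x hx => ?_)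
  rcases (Walk.mem_support_append_iff _ _).1 hx with hx | hx
  · rw [Walk.support_reverse, List.mem_reverse] at hx
    exact Set.mem_biUnion hb ((p b).support_takeUntil_subset_support hub hx)
  · exact Set.mem_biUnion hb' ((p b').support_takeUntil_subset_support hvb' hx)

lemma SimpleGraph.IsTree.isAlmostRayGraph_of_ray (hG : G.IsTree) {f : ℕ → V}
    (hadj : ∀ n, G.Adj (f n) (f (n + 1))) (hinj : Function.Injective f)
    (hW : (Set.range f)ᶜ.Finite) : IsAlmostRayGraph G := by
  set B := insert (f 0) (Set.range f)ᶜ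
  set H := ⋃ b ∈ B, {x | x ∈ (hG.path (f 0) b).support}
  have hWH : (Set.range f)ᶜ ⊆ H := fun x hx =>
    Set.mem_biUnion (Set.mem_insert_of_mem _ hx) (Walk.end_mem_support _)
  -- an edge from `x` off the ray lies on the path from `f 0` to `x`
  have hmem : ∀ x y, G.Adj x y → x ∉ Set.range f → y ∈ H := by
    intro x y hxy hx
    obtain ⟨k, rfl⟩ | hy := em (y ∈ Set.range f)
    · have hq : ((rayWalk hadj 0 k).copy rfl (by rw [zero_add])).IsPath := by
        simpa using isPath_rayWalk hadj hinj 0 k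
      refine Set.mem_biUnion (Set.mem_insert_of_mem _ hx) <|
        hG.isAcyclic.mem_support_of_ne_mem_support_of_adj_of_isPath (hG.isPath_path _ _) hq hxy ?_
      simp only [Walk.support_copy, mem_support_rayWalk]
      rintro ⟨i, -, rfl⟩
      exact hx ⟨_, rfl⟩
    · exact hWH hy
  refine ⟨(⊤ : G.Subgraph).induce (Set.range f), (⊤ : G.Subgraph).induce H, ?_, ?_, ?_⟩
  · refine ⟨f, hinj, rfl, fun x y => ?_⟩
    simp only [Subgraph.induce_adj, Subgraph.top_adj]
    constructor
    · rintro ⟨⟨m, rfl⟩, ⟨n, rfl⟩, h⟩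
      rcases (hG.isAcyclic.adj_ray_iff hadj hinj).1 h with rfl | rfl
      exacts [⟨m, Or.inl ⟨rfl, rfl⟩⟩, ⟨n, Or.inr ⟨rfl, rfl⟩⟩]
    · rintro ⟨n, ⟨rfl, rfl⟩ | ⟨rfl, rfl⟩⟩
      exacts [⟨⟨n, rfl⟩, ⟨n + 1, rfl⟩, hadj n⟩,
        ⟨⟨n + 1, rfl⟩, ⟨n, rfl⟩, (hadj n).symm⟩]
  · refine ⟨(hW.insert _).biUnion fun b _ => (hG.path (f 0) b).support.finite_toSet, ?_, ?_⟩
    · exact Subgraph.connected_iff'.1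
        (connected_induce_iUnion_support (Set.insert_nonempty _ _) _)
    · exact hG.isAcyclic.subgraph _
  · ext x y
    · simpa using or_iff_not_imp_right.2 fun hx => hWH hx
    · simp only [Subgraph.sup_adj, Subgraph.induce_adj, Subgraph.top_adj]
      refine ⟨fun h => h.elim (·.2.2) (·.2.2), fun hxy => ?_⟩
      by_cases hx : x ∈ Set.range f
      · by_cases hy : y ∈ Set.range f
        · exact Or.inr ⟨hx, hy, hxy⟩
        · exact Or.inl ⟨hmem y x hxy.symm hy, hWH hy, hxy⟩
      · exact Or.inl ⟨hWH hx, hmem x y hxy hx, hxy⟩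

lemma SimpleGraph.IsTree.isAlmostRayGraph_iff_exists_ray (hG : G.IsTree) :
    IsAlmostRayGraph G ↔ ∃ f : ℕ → V, Function.Injective f ∧
      (∀ n, G.Adj (f n) (f (n + 1))) ∧ (Set.range f)ᶜ.Finite := by
  refine ⟨?_, fun ⟨f, hinj, hadj, hW⟩ => hG.isAlmostRayGraph_of_ray hadj hinj hW⟩
  rintro ⟨R, T₀, ⟨f, hinj, hR, hRadj⟩, ⟨hT₀, -⟩, hsup⟩
  refine ⟨f, hinj, fun n => R.adj_sub ((hRadj _ _).2 ⟨n, Or.inl ⟨rfl, rfl⟩⟩),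
    hT₀.subset ?_⟩
  have hverts := congrArg Subgraph.verts hsup
  rw [Subgraph.verts_sup, hR, Subgraph.verts_top] at hverts
  exact fun x hx => (hverts ▸ Set.mem_univ x : x ∈ T₀.verts ∪ Set.range f).resolve_right hx

/-- In the ultrametric `d`, the finitely many balls covering `A` leave one ball meeting the ray
infinitely often; all labels past its first point on the ray are then small. -/
lemma IsLabelDist.totallyBoundedWith_univ_of_ray (hd : IsLabelDist G l d) (hG : G.Connected)
    {f : ℕ → V} (hadj : ∀ n, G.Adj (f n) (f (n + 1))) (hinj : Function.Injective f)
    (hW : (Set.range f)ᶜ.Finite) {A : Set V} (hA : A.Infinite) (hAtb : TotallyBoundedWith d A) :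
    TotallyBoundedWith d Set.univ := by
  rw [← Set.compl_union_self (Set.range f)]
  refine totallyBoundedWith_union_range hW hd.1 fun r hr => ?_
  obtain ⟨s, -, hs⟩ := hAtb r hr
  have hJ : {m | f m ∈ A}.Infinite := by
    refine Set.Infinite.of_image f ((hA.sdiff hW).mono fun x hx => ?_)
    obtain ⟨m, rfl⟩ := not_not.1 hx.2
    exact ⟨m, hx.1, rfl⟩
  obtain ⟨c, -, hc⟩ : ∃ c ∈ s, {m | f m ∈ A ∧ d c (f m) < r}.Infinite := by
    by_contra! h
    refine hJ ((s.finite_toSet.biUnion h).subset fun m hm => ?_)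
    obtain ⟨c, hc, hcm⟩ := hs _ hm
    exact Set.mem_biUnion hc ⟨hm, hcm⟩
  obtain ⟨K, -, hK⟩ := hc.nonempty
  refine ⟨K, fun k hk => ?_⟩
  obtain ⟨i, rfl⟩ := Nat.exists_eq_add_of_le hk
  rcases Nat.eq_zero_or_pos i with rfl | hi
  · rwa [add_zero, hd.1]
  obtain ⟨m, ⟨-, hm⟩, hkm⟩ := hc.exists_gt (K + i)
  obtain ⟨j, rfl⟩ := Nat.exists_eq_add_of_le (hk.trans hkm.le)
  calc d (f K) (f (K + i)) ≤ d (f K) (f (K + j)) := hd.le_of_ray hadj hinj hi.ne' (by omega)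
    _ ≤ max (d (f K) c) (d c (f (K + j))) :=
      hd.le_max hG (fun h => by have := hinj h; omega) c
    _ < r := max_lt (by rw [hd.symm hG]; exact hK) hm

def IsCounterexampleLabeling (G : SimpleGraph V) (l : V → ℝ) : Prop :=
  (∀ w, 0 ≤ l w) ∧ NondegenerateLabeling G l ∧ ∀ d, IsLabelDist G l d →
    (∃ A : Set V, A.Infinite ∧ TotallyBoundedWith d A) ∧ ¬ TotallyBoundedWith d Set.univ

lemma isCounterexampleLabeling_of_seq (hG : G.Connected) (hl0 : ∀ w, 0 ≤ l w)
    (hnd : NondegenerateLabeling G l) {a : ℕ → V} (hinj : Function.Injective a)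
    (ha : ∀ d, IsLabelDist G l d → ∀ K k, K < k → d (a K) (a k) ≤ 1 / (K + 1))
    (hone : {x | 1 ≤ l x}.Infinite) : IsCounterexampleLabeling G l := by
  refine ⟨hl0, hnd, fun d hd => ⟨⟨_, Set.infinite_range_of_injective hinj, ?_⟩,
    fun hTB => hone (hd.finite_setOf_le_label hG hTB one_pos)⟩⟩
  simpa using totallyBoundedWith_union_range Set.finite_empty hd.1
    (exists_tail_lt_of_le_one_div hd.1 (ha d hd))

/-- The even neighbours of `v` are pairwise close through `v`, which has label `0`; the odd ones
have label `1`. -/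
lemma SimpleGraph.IsTree.exists_isCounterexampleLabeling_of_infinite_neighborSet
    (hG : G.IsTree) {v : V} (hv : (G.neighborSet v).Infinite) :
    ∃ l, IsCounterexampleLabeling G l := by
  classical
  set g := hv.natEmbedding
  have hgadj : ∀ n, G.Adj v (g n) := fun n => (g n).2
  have hginj : Function.Injective fun n => (g n : V) := fun m n h => g.injective (Subtype.ext h)
  set a : ℕ → V := fun k => g (2 * k)
  have hainj : Function.Injective a := fun m n h => by have := hginj h; omega
  set l := Function.extend a (fun k : ℕ => (1 : ℝ) / (k + 1)) fun x => if x = v then 0 else 1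
  have hla : ∀ k, l (a k) = 1 / (k + 1) := hainj.extend_apply _ _
  have hloff : ∀ x, (¬∃ k, a k = x) → l x = if x = v then 0 else 1 :=
    fun x hx => Function.extend_apply' _ _ _ hx
  have hlv : l v = 0 := by
    rw [hloff v fun ⟨k, hk⟩ => (hgadj (2 * k)).ne hk.symm, if_pos rfl]
  have hlodd : ∀ k, l (g (2 * k + 1)) = 1 := fun k => by
    rw [hloff _ fun ⟨j, hj⟩ => by have := hginj hj; omega, if_neg (hgadj _).ne']
  have hpos : ∀ x, x ≠ v → 0 < l x := by
    intro x hx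
    by_cases hxa : ∃ k, a k = x
    · obtain ⟨k, rfl⟩ := hxa
      rw [hla]
      positivity
    · rw [hloff x hxa, if_neg hx]
      exact one_pos
  have hl0 : ∀ x, 0 ≤ l x := fun x =>
    (eq_or_ne x v).elim (fun h => h ▸ hlv.ge) fun h => (hpos x h).le
  have hnd : NondegenerateLabeling G l := by
    intro x y hxy
    rcases eq_or_ne x v with rfl | hx
    · exact lt_max_of_lt_right (hpos y hxy.ne')
    · exact lt_max_of_lt_left (hpos x hx)
  refine ⟨l, isCounterexampleLabeling_of_seq hG.connected hl0 hnd hainj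
    (fun d hd K k hKk => ?_) ?_⟩
  · calc d (a K) (a k) ≤ max (d (a K) v) (d v (a k)) :=
          hd.le_max hG.connected (hainj.ne hKk.ne) v
      _ ≤ 1 / (K + 1) := by
          rw [hd.eq_max_of_adj (hgadj _).symm, hd.eq_max_of_adj (hgadj _), hla, hla, hlv]
          exact max_le (max_le le_rfl (by positivity))
            (max_le (by positivity) (Nat.one_div_le_one_div hKk.le))
  · have hodd : Function.Injective fun k => (g (2 * k + 1) : V) :=
      fun m n h => by have := hginj h; omega
    refine (Set.infinite_range_of_injective hodd).mono ?_
    rintro _ ⟨k, rfl⟩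
    exact (hlodd k).ge

lemma SimpleGraph.IsTree.exists_isCounterexampleLabeling_of_ray (hG : G.IsTree) {f : ℕ → V}
    (hadj : ∀ n, G.Adj (f n) (f (n + 1))) (hinj : Function.Injective f)
    (hW : (Set.range f)ᶜ.Infinite) : ∃ l, IsCounterexampleLabeling G l := by
  set l := Function.extend f (fun n : ℕ => (1 : ℝ) / (n + 1)) 1
  have hlf : ∀ n, l (f n) = 1 / (n + 1) := hinj.extend_apply _ _
  have hloff : ∀ x ∉ Set.range f, l x = 1 := fun x hx => Function.extend_apply' _ _ _ hx
  have hpos : ∀ x, 0 < l x := by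
    intro x
    by_cases hx : x ∈ Set.range f
    · obtain ⟨n, rfl⟩ := hx
      rw [hlf]
      positivity
    · rw [hloff x hx]
      exact one_pos
  refine ⟨l, isCounterexampleLabeling_of_seq hG.connected (fun x => (hpos x).le)
    (fun x y _ => lt_max_of_lt_left (hpos x)) hinj (fun d hd K k hKk => ?_)
    (hW.mono fun x hx => (hloff x hx).ge)⟩
  obtain ⟨i, rfl⟩ := Nat.exists_eq_add_of_le hKk.le
  obtain ⟨x, hx, hdx⟩ :=
    hd.exists_mem_support_eq (hinj.ne hKk.ne) (isPath_rayWalk hadj hinj K i)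
  obtain ⟨j, -, rfl⟩ := (mem_support_rayWalk hadj).1 hx
  rw [hdx, hlf]
  exact Nat.one_div_le_one_div (Nat.le_add_right K j)

lemma SimpleGraph.IsTree.exists_isCounterexampleLabeling [Infinite V] (hG : G.IsTree)
    (h : ¬ IsAlmostRayGraph G) : ∃ l, IsCounterexampleLabeling G l := by
  by_cases hfin : ∀ v, (G.neighborSet v).Finite
  · obtain ⟨f, hinj, hadj⟩ := hG.exists_ray hfin
    exact hG.exists_isCounterexampleLabeling_of_ray hadj hinj fun hW =>
      h (hG.isAlmostRayGraph_iff_exists_ray.2 ⟨f, hinj, hadj, hW⟩)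
  · push Not at hfin
    obtain ⟨v, hv⟩ := hfin
    exact hG.exists_isCounterexampleLabeling_of_infinite_neighborSet (Set.not_finite.1 hv)

end

/-- An infinite tree `T` is almost a ray iff for every non-degenerate
labeling `l` the space `(V(T), d_l)` is totally bounded exactly when it contains an
infinite totally bounded subset. -/
theorem stmt10 {V : Type*} [Infinite V] (G : SimpleGraph V) (hG : G.IsTree) :
    IsAlmostRayGraph G ↔
      ∀ l : V → ℝ, (∀ w, 0 ≤ l w) → NondegenerateLabeling G l →
        ∀ d : V → V → ℝ, IsLabelDist G l d →
          (TotallyBoundedWith d Set.univ ↔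
            ∃ A : Set V, A.Infinite ∧ TotallyBoundedWith d A) := by
  refine ⟨fun hray l _ _ d hd => ?_, fun h => by_contra fun hray => ?_⟩
  · obtain ⟨f, hinj, hadj, hW⟩ := hG.isAlmostRayGraph_iff_exists_ray.1 hray
    exact ⟨fun hTB => ⟨Set.univ, Set.infinite_univ, hTB⟩,
      fun ⟨A, hA, hAtb⟩ =>
        hd.totallyBoundedWith_univ_of_ray hG.connected hadj hinj hW hA hAtb⟩
  · obtain ⟨l, hl0, hnd, hl⟩ := hG.exists_isCounterexampleLabeling hray
    obtain ⟨d, hd⟩ := hG.exists_isLabelDist l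
    obtain ⟨hA, hTB⟩ := hl d hd
    exact hTB ((h l hl0 hnd d hd).2 hA)
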